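/- arXiv:1708.09729 — 2 statements merged into one kernel-verified Lean document; each statement's English description precedes it below -/
import Mathlib

section
/- Let V be a finite-dimensional complex vector space, W a finite subgroup of GL(V), and U a linear subspace of V. Let W_U = {w ∈ W : w u = u for all u ∈ U} be the pointwise stabilizer of U, and let r = dim_ℂ V − dim_ℂ V^{W_U}, where V^{W_U} = {v ∈ V : w v = v for all w ∈ W_U}. Then for every z in the center of ℂW_U (viewed in ℂW), the element Tr_{W_U}^W(z) = (1/|W_U|) Σ_{g∈W} g z g⁻¹ lies in Z(ℂW) ∩ F_r(ℂW). -/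
/-!
Summing `g x g⁻¹` over the whole group `W` gives a central element of `ℂW` for every `x ∈ ℂW`.
Conjugation preserves `cod`, since `V^(g h g⁻¹) = g V^h`, and for `h ∈ W_U` the inclusion
`V^{W_U} ⊆ V^h` gives `cod h ≤ r`; so every conjugate of an element of `ℂW_U` lies in `F_r(ℂW)`.
-/

/-- The fixed subspace `V^w = {v ∈ V | w v = v}` of an element `w` of a subgroup `W` of
`GL(V)`. -/
noncomputable def fixedSpace {V : Type*} [AddCommGroup V] [Module ℂ V]
    (W : Subgroup (V →ₗ[ℂ] V)ˣ) (w : W) : Submodule ℂ V :=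
  LinearMap.eqLocus ((w : (V →ₗ[ℂ] V)ˣ) : V →ₗ[ℂ] V) LinearMap.id

/-- `cod(w) = dim V − dim V^w`. -/
noncomputable def cod {V : Type*} [AddCommGroup V] [Module ℂ V]
    (W : Subgroup (V →ₗ[ℂ] V)ˣ) (w : W) : ℕ :=
  Module.finrank ℂ V - Module.finrank ℂ (fixedSpace W w)

/-- `F_i(ℂW)`: the ℂ-span in the group algebra `ℂW` of the group elements `w` with
`cod(w) ≤ i`. -/
noncomputable def filt {V : Type*} [AddCommGroup V] [Module ℂ V]
    (W : Subgroup (V →ₗ[ℂ] V)ˣ) (i : ℕ) : Submodule ℂ (MonoidAlgebra ℂ W) :=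
  Submodule.span ℂ {x | ∃ w : W, cod W w ≤ i ∧ x = MonoidAlgebra.of ℂ W w}

/-- The pointwise stabilizer `W_U = {w ∈ W | ∀ u ∈ U, w u = u}` of a subspace `U ⊆ V`. -/
def fixator {V : Type*} [AddCommGroup V] [Module ℂ V]
    (W : Subgroup (V →ₗ[ℂ] V)ˣ) (U : Submodule ℂ V) : Subgroup W where
  carrier := {w : W | ∀ u ∈ U, ((w : (V →ₗ[ℂ] V)ˣ) : V →ₗ[ℂ] V) u = u}
  one_mem' := by intro u hu; simp
  mul_mem' := by
    intro a b ha hb u hu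
    simp only [Subgroup.coe_mul, Units.val_mul, Module.End.mul_apply]
    rw [hb u hu, ha u hu]
  inv_mem' := by
    intro a ha u hu
    conv_lhs => rw [← ha u hu]
    rw [← Module.End.mul_apply, ← Units.val_mul, ← Subgroup.coe_mul, inv_mul_cancel]
    simp

/-- The fixed subspace `V^H = {v ∈ V | ∀ w ∈ H, w v = v}` of a subgroup `H ≤ W`. -/
noncomputable def groupFixed {V : Type*} [AddCommGroup V] [Module ℂ V]
    (W : Subgroup (V →ₗ[ℂ] V)ˣ) (H : Subgroup W) : Submodule ℂ V :=
  ⨅ w : H, fixedSpace W (w : W)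

/-- The truncated induction (transfer) map `Tr_H^W : ℂW → ℂW`,
`z ↦ (1/|H|) Σ_{g ∈ W} g z g⁻¹`, as a ℂ-linear endomorphism of `ℂW`. -/
noncomputable def TrMap {V : Type*} [AddCommGroup V] [Module ℂ V]
    (W : Subgroup (V →ₗ[ℂ] V)ˣ) [Fintype W] (H : Subgroup W) :
    MonoidAlgebra ℂ W →ₗ[ℂ] MonoidAlgebra ℂ W :=
  (Nat.card H : ℂ)⁻¹ •
    ∑ g : W,
      (LinearMap.mulLeft ℂ (MonoidAlgebra.of ℂ W g)).comp
        (LinearMap.mulRight ℂ (MonoidAlgebra.of ℂ W g⁻¹))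

/-- The inclusion `ℂH → ℂW` of group algebras induced by the inclusion of a subgroup
`H ≤ W`. -/
noncomputable def subgroupAlgebraIncl {V : Type*} [AddCommGroup V] [Module ℂ V]
    (W : Subgroup (V →ₗ[ℂ] V)ˣ) (H : Subgroup W) :
    MonoidAlgebra ℂ H →ₐ[ℂ] MonoidAlgebra ℂ W :=
  MonoidAlgebra.mapDomainAlgHom ℂ ℂ H.subtype


namespace MonoidAlgebra

variable {k G : Type*} [CommSemiring k] [Group G]

theorem mem_center_of_forall_of_mul_eq {x : MonoidAlgebra k G}
    (hx : ∀ g : G, of k G g * x = x * of k G g) : x ∈ Subalgebra.center k (MonoidAlgebra k G) := by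
  rw [Subalgebra.mem_center_iff]
  intro b
  induction b using MonoidAlgebra.induction_on with
  | of g => exact hx g
  | add b c hb hc => rw [add_mul, mul_add, hb, hc]
  | smul c b hb => rw [smul_mul_assoc, mul_smul_comm, hb]

theorem sum_of_mul_mul_of_inv_mem_center [Fintype G] (x : MonoidAlgebra k G) :
    ∑ g : G, of k G g * (x * of k G g⁻¹) ∈ Subalgebra.center k (MonoidAlgebra k G) := by
  refine mem_center_of_forall_of_mul_eq fun w => ?_
  rw [Finset.mul_sum, Finset.sum_mul]
  refine Fintype.sum_equiv (Equiv.mulLeft w) _ _ fun g => ?_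
  simp only [Equiv.coe_mulLeft, mul_inv_rev, map_mul, mul_assoc, ← map_mul (of k G) w⁻¹,
    inv_mul_cancel, map_one, mul_one]

end MonoidAlgebra

section

variable {V : Type*} [AddCommGroup V] [Module ℂ V] (W : Subgroup (V →ₗ[ℂ] V)ˣ)

theorem fixedSpace_conj (g w : W) :
    fixedSpace W (g * w * g⁻¹) =
      (fixedSpace W w).map
        (LinearMap.GeneralLinearGroup.toLinearEquiv (g : (V →ₗ[ℂ] V)ˣ) : V →ₗ[ℂ] V) := by
  set e := LinearMap.GeneralLinearGroup.toLinearEquiv (g : (V →ₗ[ℂ] V)ˣ)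
  ext v
  rw [Submodule.mem_map_equiv]
  exact e.eq_symm_apply.symm

theorem cod_conj (g w : W) : cod W (g * w * g⁻¹) = cod W w := by
  rw [cod, cod, fixedSpace_conj, LinearEquiv.finrank_map_eq]

theorem cod_le_of_mem [FiniteDimensional ℂ V] {H : Subgroup W} {h : W} (hh : h ∈ H) :
    cod W h ≤ Module.finrank ℂ V - Module.finrank ℂ (groupFixed W H) :=
  Nat.sub_le_sub_left (Submodule.finrank_mono (iInf_le (fun w : H => fixedSpace W w) ⟨h, hh⟩)) _

theorem of_mul_mul_of_inv_mem_filt {i : ℕ} {x : MonoidAlgebra ℂ W} (hx : x ∈ filt W i) (g : W) :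
    MonoidAlgebra.of ℂ W g * (x * MonoidAlgebra.of ℂ W g⁻¹) ∈ filt W i := by
  have : filt W i ≤ (filt W i).comap ((LinearMap.mulLeft ℂ (MonoidAlgebra.of ℂ W g)).comp
      (LinearMap.mulRight ℂ (MonoidAlgebra.of ℂ W g⁻¹))) := by
    refine Submodule.span_le.mpr ?_
    rintro _ ⟨w, hw, rfl⟩
    refine Submodule.subset_span ⟨g * w * g⁻¹, (cod_conj W g w).trans_le hw, ?_⟩
    simp only [LinearMap.comp_apply, LinearMap.mulLeft_apply, LinearMap.mulRight_apply, map_mul,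
      mul_assoc]
  exact this hx

theorem subgroupAlgebraIncl_mem_filt [FiniteDimensional ℂ V] (H : Subgroup W)
    (y : MonoidAlgebra ℂ H) :
    subgroupAlgebraIncl W H y ∈ filt W (Module.finrank ℂ V - Module.finrank ℂ (groupFixed W H)) := by
  induction y using MonoidAlgebra.induction_on with
  | of h =>
    refine Submodule.subset_span ⟨h, cod_le_of_mem W h.2, ?_⟩
    simp [subgroupAlgebraIncl]
  | add y y' hy hy' => rw [map_add]; exact Submodule.add_mem _ hy hy'
  | smul c y hy => rw [map_smul]; exact Submodule.smul_mem _ c hy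

variable [Fintype W]

theorem TrMap_apply (H : Subgroup W) (x : MonoidAlgebra ℂ W) :
    TrMap W H x = (Nat.card H : ℂ)⁻¹ •
      ∑ g : W, MonoidAlgebra.of ℂ W g * (x * MonoidAlgebra.of ℂ W g⁻¹) := by
  simp only [TrMap, LinearMap.smul_apply, LinearMap.sum_apply, LinearMap.comp_apply,
    LinearMap.mulLeft_apply, LinearMap.mulRight_apply]

theorem TrMap_mem_center (H : Subgroup W) (x : MonoidAlgebra ℂ W) :
    TrMap W H x ∈ Subalgebra.center ℂ (MonoidAlgebra ℂ W) := by
  rw [TrMap_apply]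
  exact Subalgebra.smul_mem _ (MonoidAlgebra.sum_of_mul_mul_of_inv_mem_center x) _

theorem TrMap_mem_filt (H : Subgroup W) {i : ℕ} {x : MonoidAlgebra ℂ W} (hx : x ∈ filt W i) :
    TrMap W H x ∈ filt W i := by
  rw [TrMap_apply]
  exact Submodule.smul_mem _ _ (Submodule.sum_mem _ fun g _ => of_mul_mul_of_inv_mem_filt W hx g)

end

theorem trace_of_parabolic_center_mem_general
    (V : Type*) [AddCommGroup V] [Module ℂ V] [FiniteDimensional ℂ V]
    (W : Subgroup (V →ₗ[ℂ] V)ˣ) [Fintype W] (U : Submodule ℂ V)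
    (z : MonoidAlgebra ℂ (fixator W U)) :
    TrMap W (fixator W U) (subgroupAlgebraIncl W (fixator W U) z)
      ∈ Subalgebra.toSubmodule (Subalgebra.center ℂ (MonoidAlgebra ℂ W)) ⊓
          filt W (Module.finrank ℂ V -
            Module.finrank ℂ (groupFixed W (fixator W U))) :=
  ⟨TrMap_mem_center W _ _, TrMap_mem_filt W _ (subgroupAlgebraIncl_mem_filt W _ z)⟩

/-- For a subspace `U ⊆ V` with pointwise stabilizer `W_U` and
`r = dim V − dim V^{W_U}`, the image under `Tr_{W_U}^W` of any element of `Z(ℂW_U)`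
(viewed in `ℂW`) lies in `Z(ℂW) ∩ F_r(ℂW)`. -/
theorem trace_of_parabolic_center_mem
    (V : Type*) [AddCommGroup V] [Module ℂ V] [FiniteDimensional ℂ V]
    (W : Subgroup (V →ₗ[ℂ] V)ˣ) [Fintype W] (U : Submodule ℂ V)
    (z : MonoidAlgebra ℂ (fixator W U))
    (hz : z ∈ Subalgebra.center ℂ (MonoidAlgebra ℂ (fixator W U))) :
    TrMap W (fixator W U) (subgroupAlgebraIncl W (fixator W U) z)
      ∈ Subalgebra.toSubmodule (Subalgebra.center ℂ (MonoidAlgebra ℂ W)) ⊓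
          filt W (Module.finrank ℂ V -
            Module.finrank ℂ (groupFixed W (fixator W U))) :=
  trace_of_parabolic_center_mem_general V W U z
end

section
/- For all complex numbers a, b, c, d, let J be the ideal of ℂ[x, y] generated by x³ + a x + b and y − c x² − d x − (2/3) a c, and consider the 3-dimensional ℂ-algebra A = ℂ[x, y]/J. Then the ℂ-linear endomorphism of A given by multiplication by the class of x has trace 0, and the ℂ-linear endomorphism of A given by multiplication by the class of y also has trace 0. -/
/-!
Modulo `J` we have `y ≡ q(x) := c x² + d x + (2/3) a c`, so `A ≅ ℂ[x]/(g)` with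
`g = x³ + a x + b`. In the basis `1, x, x²` the `i`-th diagonal entry of multiplication by `f`
is the coefficient of `xⁱ` in `f xⁱ mod g`; this gives `tr x = 0` and `tr x² = -2a`, hence
`tr y = c tr x² + d tr x + 3 · (2/3) a c = 0`.
-/

open MvPolynomial

/-- The ideal `J = ⟨x³ + a x + b, y − c x² − d x − (2/3) a c⟩` of `ℂ[x, y]`. -/
noncomputable def hilbIdeal (a b c d : ℂ) : Ideal (MvPolynomial (Fin 2) ℂ) :=
  Ideal.span
    {X 0 ^ 3 + C a * X 0 + C b,
     X 1 - C c * X 0 ^ 2 - C d * X 0 - C (2 / 3 * a * c)}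

open Polynomial

theorem LinearMap.trace_mulLeft {R A : Type*} [CommRing R] [CommRing A] [Algebra R A] (x : A) :
    LinearMap.trace R A (LinearMap.mulLeft R x) = Algebra.trace R A x :=
  rfl

namespace AdjoinRoot

variable {R : Type*} [CommRing R] {g : R[X]}

theorem trace_mk (hg : g.Monic) (f : R[X]) :
    Algebra.trace R (AdjoinRoot g) (mk g f) =
      ∑ i ∈ Finset.range g.natDegree, (f * Polynomial.X ^ i %ₘ g).coeff i := by
  classical
  rw [Algebra.trace_eq_matrix_trace (powerBasis' hg).basis, Matrix.trace,
    ← Fin.sum_univ_eq_sum_range (fun i ↦ (f * Polynomial.X ^ i %ₘ g).coeff i)]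
  refine Finset.sum_congr rfl fun i _ ↦ ?_
  rw [Matrix.diag_apply, Algebra.leftMulMatrix_eq_repr_mul, (powerBasis' hg).basis_eq_pow,
    powerBasis'_gen, ← mk_X, ← map_pow, ← map_mul]
  exact (powerBasisAux'_repr_apply_to_fun hg _ i).trans (by rw [modByMonicHom_mk])

theorem trace_of (hg : g.Monic) (r : R) :
    Algebra.trace R (AdjoinRoot g) (of g r) = g.natDegree • r := by
  simpa using Algebra.trace_algebraMap_of_basis (powerBasis' hg).basis r

end AdjoinRoot

section DepressedCubic

open AdjoinRoot

variable {R : Type*} [CommRing R] (a b : R)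

noncomputable def depressedCubic : R[X] :=
  Polynomial.X ^ 3 + Polynomial.C a * Polynomial.X + Polynomial.C b

theorem monic_depressedCubic : (depressedCubic a b).Monic := by
  unfold depressedCubic; monicity!

variable [Nontrivial R]

theorem natDegree_depressedCubic : (depressedCubic a b).natDegree = 3 := by
  unfold depressedCubic; compute_degree!

theorem degree_depressedCubic : (depressedCubic a b).degree = 3 := by
  unfold depressedCubic; compute_degree!

theorem X_pow_modByMonic_depressedCubic {k : ℕ} (hk : k < 3) :
    Polynomial.X ^ k %ₘ depressedCubic a b = Polynomial.X ^ k := by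
  rw [modByMonic_eq_self_iff (monic_depressedCubic a b), degree_depressedCubic, degree_X_pow]
  exact_mod_cast hk

theorem X_pow_three_modByMonic_depressedCubic :
    Polynomial.X ^ 3 %ₘ depressedCubic a b =
      -(Polynomial.C a * Polynomial.X + Polynomial.C b) := by
  refine (div_modByMonic_unique 1 _ (monic_depressedCubic a b) ⟨?_, ?_⟩).2
  · rw [depressedCubic]; ring
  · rw [degree_depressedCubic]; compute_degree!

theorem X_pow_four_modByMonic_depressedCubic :
    Polynomial.X ^ 4 %ₘ depressedCubic a b =
      -(Polynomial.C a * Polynomial.X ^ 2 + Polynomial.C b * Polynomial.X) := by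
  refine (div_modByMonic_unique Polynomial.X _ (monic_depressedCubic a b) ⟨?_, ?_⟩).2
  · rw [depressedCubic]; ring
  · rw [degree_depressedCubic]; compute_degree!

theorem trace_root_depressedCubic :
    Algebra.trace R (AdjoinRoot (depressedCubic a b)) (root _) = 0 := by
  rw [← mk_X, trace_mk (monic_depressedCubic a b), natDegree_depressedCubic]
  simp only [Finset.sum_range_succ, Finset.range_zero, Finset.sum_empty, ← pow_succ',
    Nat.reduceAdd, X_pow_modByMonic_depressedCubic a b (by norm_num : 1 < 3),
    X_pow_modByMonic_depressedCubic a b (by norm_num : 2 < 3),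
    X_pow_three_modByMonic_depressedCubic]
  simp

theorem trace_root_sq_depressedCubic :
    Algebra.trace R (AdjoinRoot (depressedCubic a b)) (root _ ^ 2) = -2 * a := by
  rw [← mk_X, ← map_pow, trace_mk (monic_depressedCubic a b), natDegree_depressedCubic]
  simp [Finset.sum_range_succ, ← pow_add, X_pow_modByMonic_depressedCubic,
    X_pow_three_modByMonic_depressedCubic, X_pow_four_modByMonic_depressedCubic]
  ring

theorem trace_mk_quadratic_depressedCubic (c d e : R) :
    Algebra.trace R (AdjoinRoot (depressedCubic a b))
        (mk _ (Polynomial.C c * Polynomial.X ^ 2 + Polynomial.C d * Polynomial.X +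
          Polynomial.C e)) = 3 * e - 2 * a * c := by
  simp only [map_add, map_mul, map_pow, mk_C, mk_X, ← AdjoinRoot.algebraMap_eq,
    ← Algebra.smul_def, map_smul, trace_root_sq_depressedCubic, trace_root_depressedCubic]
  rw [AdjoinRoot.algebraMap_eq, trace_of (monic_depressedCubic a b), natDegree_depressedCubic]
  simp only [smul_eq_mul, nsmul_eq_mul, Nat.cast_ofNat]
  ring

end DepressedCubic

section GraphIdeal

variable {R : Type*} [CommRing R] (g q : R[X])

noncomputable def graphIdeal : Ideal (MvPolynomial (Fin 2) R) :=
  Ideal.span {Polynomial.aeval (X 0) g, X 1 - Polynomial.aeval (X 0) q}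

theorem aeval_mk_X_zero_graphIdeal :
    Polynomial.aeval (Ideal.Quotient.mk (graphIdeal g q) (X 0)) g = 0 := by
  rw [← Ideal.Quotient.mkₐ_eq_mk R, Polynomial.aeval_algHom_apply, Ideal.Quotient.mkₐ_eq_mk,
    Ideal.Quotient.eq_zero_iff_mem]
  exact Ideal.subset_span (Set.mem_insert _ _)

theorem mk_X_one_graphIdeal :
    Ideal.Quotient.mk (graphIdeal g q) (X 1) =
      Polynomial.aeval (Ideal.Quotient.mk (graphIdeal g q) (X 0)) q := by
  rw [← Ideal.Quotient.mkₐ_eq_mk R, Polynomial.aeval_algHom_apply, Ideal.Quotient.mkₐ_eq_mk,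
    Ideal.Quotient.eq]
  exact Ideal.subset_span (Set.mem_insert_of_mem _ rfl)

noncomputable def graphIdealQuotientToAdjoinRoot :
    (MvPolynomial (Fin 2) R ⧸ graphIdeal g q) →ₐ[R] AdjoinRoot g :=
  Ideal.Quotient.liftₐ _ (MvPolynomial.aeval ![AdjoinRoot.root g, AdjoinRoot.mk g q]) <| by
    suffices graphIdeal g q ≤
        RingHom.ker (MvPolynomial.aeval ![AdjoinRoot.root g, AdjoinRoot.mk g q]) from
      fun p hp ↦ this hp
    rw [graphIdeal, Ideal.span_le]
    rintro p (rfl | rfl) <;> simp [← Polynomial.aeval_algHom_apply, AdjoinRoot.aeval_eq]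

@[simp]
theorem graphIdealQuotientToAdjoinRoot_mk (p : MvPolynomial (Fin 2) R) :
    graphIdealQuotientToAdjoinRoot g q (Ideal.Quotient.mk _ p) =
      MvPolynomial.aeval ![AdjoinRoot.root g, AdjoinRoot.mk g q] p :=
  rfl

noncomputable def adjoinRootToGraphIdealQuotient :
    AdjoinRoot g →ₐ[R] MvPolynomial (Fin 2) R ⧸ graphIdeal g q :=
  AdjoinRoot.liftAlgHom g (Algebra.ofId _ _) (Ideal.Quotient.mk _ (X 0))
    (aeval_mk_X_zero_graphIdeal g q)

@[simp]
theorem adjoinRootToGraphIdealQuotient_mk (p : R[X]) :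
    adjoinRootToGraphIdealQuotient g q (AdjoinRoot.mk g p) =
      Polynomial.aeval (Ideal.Quotient.mk (graphIdeal g q) (X 0)) p :=
  rfl

noncomputable def graphIdealQuotientEquiv :
    (MvPolynomial (Fin 2) R ⧸ graphIdeal g q) ≃ₐ[R] AdjoinRoot g :=
  AlgEquiv.ofAlgHom (graphIdealQuotientToAdjoinRoot g q) (adjoinRootToGraphIdealQuotient g q)
    (AdjoinRoot.algHom_ext (by simp [← AdjoinRoot.mk_X]))
    (by
      refine Ideal.Quotient.algHom_ext _ (MvPolynomial.algHom_ext fun i ↦ ?_)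
      fin_cases i
      · simp [← AdjoinRoot.mk_X]
      · simpa using (mk_X_one_graphIdeal g q).symm)

theorem graphIdealQuotientEquiv_mk_X_zero :
    graphIdealQuotientEquiv g q (Ideal.Quotient.mk _ (X 0)) = AdjoinRoot.root g := by
  simp [graphIdealQuotientEquiv]

theorem graphIdealQuotientEquiv_mk_X_one :
    graphIdealQuotientEquiv g q (Ideal.Quotient.mk _ (X 1)) = AdjoinRoot.mk g q := by
  simp [graphIdealQuotientEquiv]

end GraphIdeal

theorem hilbIdeal_eq_graphIdeal (a b c d : ℂ) :
    hilbIdeal a b c d = graphIdeal (depressedCubic a b)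
      (Polynomial.C c * Polynomial.X ^ 2 + Polynomial.C d * Polynomial.X +
        Polynomial.C (2 / 3 * a * c)) := by
  simp only [hilbIdeal, graphIdeal, depressedCubic, map_add, map_mul, map_pow, Polynomial.aeval_X,
    Polynomial.aeval_C, MvPolynomial.algebraMap_eq, sub_add_eq_sub_sub]

/-- On `A = ℂ[x, y]/J`, multiplication by the class of `x` and multiplication by the
class of `y` are ℂ-linear endomorphisms of trace `0` (the subscheme defined by `J` has
center of mass at the origin). -/
theorem trace_mul_eq_zero_on_hilb_quotient (a b c d : ℂ) :
    LinearMap.trace ℂ (MvPolynomial (Fin 2) ℂ ⧸ hilbIdeal a b c d)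
        (LinearMap.mulLeft ℂ (Ideal.Quotient.mk (hilbIdeal a b c d) (X 0))) = 0 ∧
    LinearMap.trace ℂ (MvPolynomial (Fin 2) ℂ ⧸ hilbIdeal a b c d)
        (LinearMap.mulLeft ℂ (Ideal.Quotient.mk (hilbIdeal a b c d) (X 1))) = 0 := by
  rw [hilbIdeal_eq_graphIdeal]
  refine ⟨?_, ?_⟩ <;>
    rw [LinearMap.trace_mulLeft, ← Algebra.trace_eq_of_algEquiv (graphIdealQuotientEquiv _ _)]
  · rw [graphIdealQuotientEquiv_mk_X_zero, trace_root_depressedCubic]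
  · rw [graphIdealQuotientEquiv_mk_X_one, trace_mk_quadratic_depressedCubic]
    ring
end
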